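/- Let M be a multi-context system, η a set of integrity constraints over M, and M'' the MCS obtained by adding the context C_0 with ACC_0(∅) = ∅, ACC_0({*}) = {{*}} and the bridge rules obtained from η by adding head (0:*). Then the equilibria of M'' are exactly the belief states (S_1, ..., S_n, {*}) such that (S_1, ..., S_n) is an equilibrium of M that fails to satisfy at least one integrity constraint in η; in particular, no belief state S' of M'' with app_0(S') = ∅ is an equilibrium of M''. -/

import Mathlib

/-- A ground bridge rule `(i : head) ← pos, not neg` of context `i`:
`pos` and `neg` are sets of pairs `(c, p)` meaning "belief `p` queried in context `c`". -/
structure BridgeRule (ι α : Type*) where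
  head : α
  pos : Set (ι × α)
  neg : Set (ι × α)

/-- A ground integrity constraint `← pos, not neg` over an MCS. -/
structure IntegrityConstraint (ι α : Type*) where
  pos : Set (ι × α)
  neg : Set (ι × α)

/-- A context of an MCS: a logic (given by its semantics `ACC`, mapping each
knowledge base to its set of acceptable belief sets), a knowledge base `kb`,
and a set of bridge rules `br`. -/
structure Context (ι α : Type*) where
  ACC : Set α → Set (Set α)
  kb : Set α
  br : Set (BridgeRule ι α)

/-- A multi-context system: a family of contexts indexed by `ι`. -/
abbrev MCS (ι α : Type*) := ι → Context ι α

/-- A belief state: one belief set per context. -/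
abbrev BeliefState (ι α : Type*) := ι → Set α

/-- A bridge rule is applicable in a belief state `S` if every positive body
literal holds in the corresponding belief set and no negative one does. -/
def BridgeRule.applicable {ι α : Type*} (r : BridgeRule ι α) (S : BeliefState ι α) : Prop :=
  (∀ q ∈ r.pos, q.2 ∈ S q.1) ∧ ∀ q ∈ r.neg, q.2 ∉ S q.1

/-- `app M i S`: the heads of the applicable bridge rules of context `i` w.r.t. `S`. -/
def app {ι α : Type*} (M : MCS ι α) (i : ι) (S : BeliefState ι α) : Set α :=
  {a | ∃ r ∈ (M i).br, r.applicable S ∧ r.head = a}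

/-- `S` is an equilibrium of `M` if `S i ∈ ACC_i (kb_i ∪ app_i S)` for every `i`. -/
def IsEquilibrium {ι α : Type*} (M : MCS ι α) (S : BeliefState ι α) : Prop :=
  ∀ i, S i ∈ (M i).ACC ((M i).kb ∪ app M i S)

/-- Logical consistency: existence of an equilibrium. -/
def LogConsistent {ι α : Type*} (M : MCS ι α) : Prop :=
  ∃ S, IsEquilibrium M S

/-- A belief state satisfies an integrity constraint unless all its positive body
literals hold and all its negative body literals fail. -/
def Satisfies {ι α : Type*} (S : BeliefState ι α) (c : IntegrityConstraint ι α) : Prop :=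
  ¬ ((∀ q ∈ c.pos, q.2 ∈ S q.1) ∧ ∀ q ∈ c.neg, q.2 ∉ S q.1)

/-- `M` weakly satisfies `η`: some equilibrium of `M` satisfies every IC in `η`. -/
def WeakSat {ι α : Type*} (M : MCS ι α) (η : Set (IntegrityConstraint ι α)) : Prop :=
  ∃ S, IsEquilibrium M S ∧ ∀ c ∈ η, Satisfies S c

/-- `M` strongly satisfies `η`: `M` is logically consistent and every
equilibrium of `M` satisfies every IC in `η`. -/
def StrongSat {ι α : Type*} (M : MCS ι α) (η : Set (IntegrityConstraint ι α)) : Prop :=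
  LogConsistent M ∧ ∀ S, IsEquilibrium M S → ∀ c ∈ η, Satisfies S c

/-- Relabel a body literal for the extended system (old contexts become `some i`). -/
def liftPair {ι α : Type*} (q : ι × α) : Option ι × α := (some q.1, q.2)

/-- Lift a bridge rule of `M` to the extended system. -/
def liftRule {ι α : Type*} (r : BridgeRule ι α) : BridgeRule (Option ι) α :=
  ⟨r.head, liftPair '' r.pos, liftPair '' r.neg⟩

/-- The bridge rule `(0 : *) ← body of c` obtained from an integrity constraint `c`. -/
def icRule {ι α : Type*} (star : α) (c : IntegrityConstraint ι α) : BridgeRule (Option ι) α :=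
  ⟨star, liftPair '' c.pos, liftPair '' c.neg⟩

/-- The MCS obtained from `M` by adding an extra context `C₀` (index `none`)
with empty knowledge base, semantics `ACC0`, and, for each integrity constraint
in `η`, a bridge rule with head `(0 : *)` and the same body. -/
def extMCS {ι α : Type*} (M : MCS ι α) (η : Set (IntegrityConstraint ι α))
    (star : α) (ACC0 : Set α → Set (Set α)) : MCS (Option ι) α :=
  fun o => match o with
  | some i => ⟨(M i).ACC, (M i).kb, liftRule '' (M i).br⟩
  | none => ⟨ACC0, ∅, icRule star '' η⟩


/-!
Lifted bridge rules see exactly the old belief sets, so on the old contexts the equilibrium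
conditions of `M''` and `M` coincide. The only bridge rules of `C₀` have head `*` and fire exactly
when an integrity constraint is violated, so `app₀` is `{*}` or `∅` according to whether some
constraint in `η` fails; since `ACC₀ ∅ = ∅`, the second case admits no equilibrium, and in the
first the belief set of `C₀` is forced to be `{*}`.
-/

section ExtMCS

variable {ι α : Type*}

lemma liftRule_applicable_iff (r : BridgeRule ι α) (S' : BeliefState (Option ι) α) :
    (liftRule r).applicable S' ↔ r.applicable (fun i => S' (some i)) := by
  simp only [BridgeRule.applicable, liftRule, liftPair, Set.forall_mem_image]

lemma icRule_applicable_iff (star : α) (c : IntegrityConstraint ι α)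
    (S' : BeliefState (Option ι) α) :
    (icRule star c).applicable S' ↔ ¬ Satisfies (fun i => S' (some i)) c := by
  simp only [BridgeRule.applicable, icRule, Satisfies, liftPair, Set.forall_mem_image, not_not]

variable (M : MCS ι α) (η : Set (IntegrityConstraint ι α)) (star : α)
  (ACC0 : Set α → Set (Set α)) (S' : BeliefState (Option ι) α)

lemma app_extMCS_some (i : ι) :
    app (extMCS M η star ACC0) (some i) S' = app M i (fun j => S' (some j)) := by
  ext a
  simp only [app, extMCS, Set.mem_ofPred_eq, Set.exists_mem_image, liftRule_applicable_iff]
  rfl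

lemma app_extMCS_none :
    app (extMCS M η star ACC0) none S' =
      {a | a = star ∧ ∃ c ∈ η, ¬ Satisfies (fun i => S' (some i)) c} := by
  ext a
  simp only [app, extMCS, Set.mem_ofPred_eq, Set.exists_mem_image, icRule_applicable_iff]
  constructor
  · rintro ⟨c, hc, hviol, rfl⟩
    exact ⟨rfl, c, hc, hviol⟩
  · rintro ⟨rfl, c, hc, hviol⟩
    exact ⟨c, hc, hviol, rfl⟩

lemma isEquilibrium_extMCS_iff :
    IsEquilibrium (extMCS M η star ACC0) S' ↔
      S' none ∈ ACC0 (app (extMCS M η star ACC0) none S') ∧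
        IsEquilibrium M (fun i => S' (some i)) := by
  constructor
  · intro h
    refine ⟨by simpa [extMCS] using h none, fun i => ?_⟩
    simpa [extMCS, app_extMCS_some] using h (some i)
  · rintro ⟨h0, h⟩ (_ | i)
    · simpa [extMCS] using h0
    · simpa [extMCS, app_extMCS_some] using h i

lemma mem_ACC0_app_extMCS_none_iff (hACC0_empty : ACC0 ∅ = ∅)
    (hACC0_star : ACC0 {star} = {{star}}) :
    S' none ∈ ACC0 (app (extMCS M η star ACC0) none S') ↔
      S' none = {star} ∧ ∃ c ∈ η, ¬ Satisfies (fun i => S' (some i)) c := by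
  rw [app_extMCS_none]
  by_cases hviol : ∃ c ∈ η, ¬ Satisfies (fun i => S' (some i)) c
  · simp only [hviol, and_true, Set.ofPred_eq_eq_singleton, hACC0_star, Set.mem_singleton_iff]
  · simp only [hviol, and_false, Set.ofPred_false, hACC0_empty, Set.mem_empty_iff_false]

end ExtMCS

/-- The equilibria of `M''` (with `ACC₀ ∅ = ∅`, `ACC₀ {*} = {{*}}`)
are exactly the belief states `(S₁, ..., Sₙ, {*})` where `(S₁, ..., Sₙ)` is an
equilibrium of `M` failing to satisfy at least one IC in `η`; in particular no
belief state `S'` with `app₀ S' = ∅` is an equilibrium of `M''`. -/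
theorem equilibria_of_strong_extension
    {ι α : Type*} (M : MCS ι α) (η : Set (IntegrityConstraint ι α))
    (star : α) (ACC0 : Set α → Set (Set α))
    (hACC0_empty : ACC0 ∅ = ∅) (hACC0_star : ACC0 {star} = {{star}}) :
    (∀ S' : BeliefState (Option ι) α,
      IsEquilibrium (extMCS M η star ACC0) S' ↔
        (S' none = {star} ∧ IsEquilibrium M (fun i => S' (some i)) ∧
          ∃ c ∈ η, ¬ Satisfies (fun i => S' (some i)) c))
    ∧ ∀ S' : BeliefState (Option ι) α,
        app (extMCS M η star ACC0) none S' = ∅ →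
          ¬ IsEquilibrium (extMCS M η star ACC0) S' := by
  refine ⟨fun S' => ?_, fun S' happ hS' => ?_⟩
  · rw [isEquilibrium_extMCS_iff,
      mem_ACC0_app_extMCS_none_iff M η star ACC0 S' hACC0_empty hACC0_star]
    tauto
  · have h0 := ((isEquilibrium_extMCS_iff M η star ACC0 S').1 hS').1
    rw [happ, hACC0_empty] at h0
    exact h0
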